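/- Let $x_1,\dots,x_n$ and $v_1,\dots,v_n$ be real numbers with $\sigma_n^2=m_{sn}-m_n^2>0$ and $\sigma_n=\sqrt{m_{sn}-m_n^2}$, where $m_n=\frac1n\sum_i x_i$, $m_{sn}=\frac1n\sum_i x_i^2$, $\overline{v_i}=\frac1n\sum_i v_i$, $\overline{x_iv_i}=\frac1n\sum_i x_iv_i$, and define the OLS offset $\hat\beta^1=\frac{m_{sn}\overline{v_i}-m_n\overline{x_iv_i}}{\sigma_n^2}$ and slope $\hat\beta^2=\frac{\overline{x_iv_i}-m_n\overline{v_i}}{\sigma_n^2}$. Then evaluating the fitted line at the complex points $z=m_n\pm i\sigma_n$ (viewing $\hat\beta^1,\hat\beta^2$ as complex numbers) yields the Van Hecke estimator $\hat\beta^1+z\hat\beta^2=\overline{v_i}\pm i\,\sigma_n\hat\beta^2$: its real part is the arithmetic mean $\overline{v_i}$ and its imaginary part is $\pm\sigma_n\hat\beta^2=\pm\frac{\overline{x_iv_i}-m_n\overline{v_i}}{\sigma_n}$. -/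
import Mathlib


open Complex

/-- The Van Hecke estimator: evaluating the fitted OLS line at the complex
points `z = mₙ ± i σₙ` gives `β̂¹ + z β̂² = v̄ ± i σₙ β̂²`, whose real part is the
arithmetic mean `v̄` and whose imaginary part is `± σₙ β̂² = ± (x̄v - mₙ v̄)/σₙ`. -/
theorem stmt_13 {n : ℕ} (x v : Fin n → ℝ)
    (mn msn vbar xvbar : ℝ)
    (hmn : mn = (1 / n : ℝ) * ∑ i, x i)
    (hmsn : msn = (1 / n : ℝ) * ∑ i, (x i) ^ 2)
    (hvbar : vbar = (1 / n : ℝ) * ∑ i, v i)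
    (hxvbar : xvbar = (1 / n : ℝ) * ∑ i, x i * v i)
    (hpos : 0 < msn - mn ^ 2)
    (σn : ℝ) (hσn : σn = Real.sqrt (msn - mn ^ 2))
    (βhat1 βhat2 : ℝ)
    (hβ1 : βhat1 = (msn * vbar - mn * xvbar) / (msn - mn ^ 2))
    (hβ2 : βhat2 = (xvbar - mn * vbar) / (msn - mn ^ 2)) :
    ((βhat1 : ℂ) + ((mn : ℂ) + Complex.I * σn) * (βhat2 : ℂ) =
        (vbar : ℂ) + Complex.I * ((σn * βhat2 : ℝ) : ℂ)) ∧
    ((βhat1 : ℂ) + ((mn : ℂ) - Complex.I * σn) * (βhat2 : ℂ) =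
        (vbar : ℂ) - Complex.I * ((σn * βhat2 : ℝ) : ℂ)) ∧
    ((βhat1 : ℂ) + ((mn : ℂ) + Complex.I * σn) * (βhat2 : ℂ)).re = vbar ∧
    ((βhat1 : ℂ) + ((mn : ℂ) + Complex.I * σn) * (βhat2 : ℂ)).im =
        (xvbar - mn * vbar) / σn ∧
    ((βhat1 : ℂ) + ((mn : ℂ) - Complex.I * σn) * (βhat2 : ℂ)).re = vbar ∧
    ((βhat1 : ℂ) + ((mn : ℂ) - Complex.I * σn) * (βhat2 : ℂ)).im =
        -((xvbar - mn * vbar) / σn) := by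
  have hσpos : 0 < σn := hσn ▸ Real.sqrt_pos.mpr hpos
  have hσ2 : σn ^ 2 = msn - mn ^ 2 := by rw [hσn, Real.sq_sqrt hpos.le]
  have h1 : βhat1 + mn * βhat2 = vbar := by
    rw [hβ1, hβ2]; field_simp; ring
  have h2 : σn * βhat2 = (xvbar - mn * vbar) / σn := by
    rw [hβ2, ← hσ2]; field_simp
  have key : ∀ s : ℝ, (βhat1 : ℂ) + ((mn : ℂ) + s * Complex.I * σn) * (βhat2 : ℂ) =
      (vbar : ℂ) + s * Complex.I * ((σn * βhat2 : ℝ) : ℂ) := by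
    intro s
    have h1c : (βhat1 : ℂ) + (mn : ℂ) * (βhat2 : ℂ) = (vbar : ℂ) := by exact_mod_cast h1
    push_cast
    linear_combination h1c
  have kp := key 1
  have km := key (-1)
  push_cast at kp km
  rw [one_mul] at kp
  have kp' : (βhat1 : ℂ) + ((mn : ℂ) + Complex.I * σn) * (βhat2 : ℂ) =
      (vbar : ℂ) + Complex.I * ((σn * βhat2 : ℝ) : ℂ) := by push_cast; linear_combination kp
  have km' : (βhat1 : ℂ) + ((mn : ℂ) - Complex.I * σn) * (βhat2 : ℂ) =
      (vbar : ℂ) - Complex.I * ((σn * βhat2 : ℝ) : ℂ) := by push_cast; linear_combination km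
  refine ⟨kp', km', ?_, ?_, ?_, ?_⟩
  · rw [kp']; simp
  · rw [kp', ← h2]; simp
  · rw [km']; simp
  · rw [km', ← h2]; simp
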